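/- arXiv:2309.08915 — 2 statements merged into one kernel-verified Lean document; each statement's English description precedes it below -/
import Mathlib

section
/- Let n ≥ 7, q > 1, n/2 ≤ k ≤ n-2, t = max{2, n-k-1}, and let I, J be a bipartition of Z_q. Then S_{I,J}^{(k)}(n) ∪ U_{I,J}^{(t)}(n) is a non-expandable cross-bifix-free code: for every x ∈ Z_q^n outside this union, adjoining x destroys the cross-bifix-free property. -/
open List

set_option maxHeartbeats 2000000
set_option linter.unusedVariables false

/-- A code (set of words) is cross-bifix-free: no proper nonempty prefix of a
codeword equals a proper nonempty suffix of a codeword. -/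
def IsCBF {α : Type*} (C : Set (List α)) : Prop :=
  ∀ u ∈ C, ∀ v ∈ C, ∀ w : List α, w ≠ [] → w.length < u.length → w.length < v.length →
    ¬ (w <+: u ∧ w <:+ v)

/-- A word is bifix-free: no proper nonempty prefix equals a proper nonempty suffix. -/
def BifixFree {α : Type*} (u : List α) : Prop :=
  ∀ w : List α, w ≠ [] → w.length < u.length → w <+: u → ¬ w <:+ u

/-- `w` is `I^k`-free: no `k` consecutive coordinates of `w` all lie in `I`. -/
def IkFree {α : Type*} (I : Set α) (k : ℕ) (w : List α) : Prop :=
  ¬ ∃ y : List α, y <:+: w ∧ y.length = k ∧ ∀ x ∈ y, x ∈ I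

/-- The code `S_{I,J}^{(k)}(n)`: words of length `n` whose first `k` coordinates lie
in `I`, whose `(k+1)`-th and `n`-th coordinates lie in `J`, and whose subword from
position `k+2` to `n-1` (1-indexed) is `I^k`-free. -/
def Sijk {q : ℕ} (I J : Set (Fin q)) (k n : ℕ) : Set (List (Fin q)) :=
  {w | w.length = n ∧ (∀ x ∈ w.take k, x ∈ I) ∧ (∃ a ∈ J, w[k]? = some a) ∧
       (∃ a ∈ J, w[n-1]? = some a) ∧ IkFree I k ((w.drop (k+1)).take (n - k - 2))}

/-- The set `V_{I,J}^{(t)}(m)` (with ambient parameters `n, k`): words of length `m`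
whose first `t` coordinates lie in `I`, whose `(t+1)`-th coordinate lies in `J`,
whose `(n-k+t)`-th coordinate lies in `I` when `m > n-k+t`, and whose last
coordinate lies in `J`. -/
def Vset {q : ℕ} (I J : Set (Fin q)) (n k t m : ℕ) : Set (List (Fin q)) :=
  {w | w.length = m ∧ (∀ x ∈ w.take t, x ∈ I) ∧ (∃ a ∈ J, w[t]? = some a) ∧
       (n - k + t < m → ∃ a ∈ I, w[n - k + t - 1]? = some a) ∧
       (∃ a ∈ J, w[m - 1]? = some a)}

/-- The set `U_{I,J}^{(t)}(m)`: words of `V_{I,J}^{(t)}(m)` whose suffix of length `ℓ`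
does not belong to `V_{I,J}^{(t)}(ℓ)` for all `t+1 ≤ ℓ ≤ m-(t+1)` with `ℓ ≠ n-k+t`. -/
def Uset {q : ℕ} (I J : Set (Fin q)) (n k t m : ℕ) : Set (List (Fin q)) :=
  {w | w ∈ Vset I J n k t m ∧ ∀ ℓ : ℕ, t + 1 ≤ ℓ → ℓ + (t + 1) ≤ m → ℓ ≠ n - k + t →
       w.drop (m - ℓ) ∉ Vset I J n k t ℓ}

/-! ### Auxiliary machinery -/

/-- The letter at position `i` of `w` lies in `S`. -/
def Pt {q : ℕ} (w : List (Fin q)) (i : ℕ) (S : Set (Fin q)) : Prop :=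
  ∃ a ∈ S, w[i]? = some a

lemma Pt_not_both {q : ℕ} {I J : Set (Fin q)} (hd : I ∩ J = ∅) {v : List (Fin q)} {j : ℕ}
    (h1 : Pt v j I) (h2 : Pt v j J) : False := by
  obtain ⟨a, ha, he⟩ := h1
  obtain ⟨b, hb, he'⟩ := h2
  rw [he] at he'
  obtain rfl := Option.some.inj he'
  have : a ∈ I ∩ J := ⟨ha, hb⟩
  rw [hd] at this
  exact this

lemma Pt_mem {q : ℕ} {w : List (Fin q)} {i : ℕ} {S : Set (Fin q)} {b : Fin q}
    (h : Pt w i S) (hb : w[i]? = some b) : b ∈ S := by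
  obtain ⟨a, ha, he⟩ := h
  rw [hb] at he
  obtain rfl := Option.some.inj he
  exact ha

lemma Pt_congr {q : ℕ} {w v : List (Fin q)} {i j : ℕ} {S : Set (Fin q)}
    (h : w[i]? = v[j]?) (hp : Pt w i S) : Pt v j S := by
  obtain ⟨a, ha, he⟩ := hp
  exact ⟨a, ha, by rw [← h, he]⟩

lemma Pt_drop {q : ℕ} {w : List (Fin q)} {j i : ℕ} {S : Set (Fin q)} :
    Pt (w.drop j) i S ↔ Pt w (j + i) S := by
  unfold Pt
  rw [List.getElem?_drop]

lemma take_forall {q : ℕ} {w : List (Fin q)} {t : ℕ} {S : Set (Fin q)} (h : t ≤ w.length) :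
    (∀ x ∈ w.take t, x ∈ S) ↔ ∀ i, i < t → Pt w i S := by
  constructor
  · intro H i hi
    refine ⟨w[i]'(by omega), H _ ?_, List.getElem?_eq_getElem (by omega)⟩
    have h1 : i < (w.take t).length := by
      rw [List.length_take]; omega
    have h2 : (w.take t)[i]'h1 = w[i]'(by omega) := List.getElem_take
    rw [← h2]
    exact List.getElem_mem _
  · intro H a ha
    obtain ⟨i, hi, rfl⟩ := List.mem_iff_getElem.mp ha
    have hit : i < t := by
      have := hi; rw [List.length_take] at this; omega
    obtain ⟨b, hb, he⟩ := H i hit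
    have h2 : (w.take t)[i]'hi = w[i]'(by omega) := List.getElem_take
    rw [h2]
    rw [List.getElem?_eq_getElem (by omega)] at he
    obtain rfl := Option.some.inj he
    exact hb

lemma IkFree_of_short {q : ℕ} {I : Set (Fin q)} {k : ℕ} {w : List (Fin q)}
    (h : w.length < k) : IkFree I k w := by
  rintro ⟨y, hy, hylen, -⟩
  have := hy.length_le
  omega

lemma mem_S_iff {q : ℕ} {I J : Set (Fin q)} {n k : ℕ} {w : List (Fin q)}
    (hnk : n ≤ 2*k) (hkn : k+2 ≤ n) (hw : w.length = n) :
    w ∈ Sijk I J k n ↔ (∀ i, i < k → Pt w i I) ∧ Pt w k J ∧ Pt w (n-1) J := by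
  have hk : k ≤ w.length := by omega
  constructor
  · rintro ⟨-, h1, h2, h3, -⟩
    exact ⟨(take_forall hk).1 h1, h2, h3⟩
  · rintro ⟨h1, h2, h3⟩
    refine ⟨hw, (take_forall hk).2 h1, h2, h3, IkFree_of_short ?_⟩
    rw [List.length_take, List.length_drop]
    omega

lemma mem_V_iff {q : ℕ} {I J : Set (Fin q)} {n k t m : ℕ} {w : List (Fin q)}
    (hw : w.length = m) (htm : t < m) :
    w ∈ Vset I J n k t m ↔
      (∀ i, i < t → Pt w i I) ∧ Pt w t J ∧ (n-k+t < m → Pt w (n-k+t-1) I) ∧ Pt w (m-1) J := by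
  have ht' : t ≤ w.length := by omega
  constructor
  · rintro ⟨-, h1, h2, h3, h4⟩
    exact ⟨(take_forall ht').1 h1, h2, h3, h4⟩
  · rintro ⟨h1, h2, h3, h4⟩
    exact ⟨hw, (take_forall ht').2 h1, h2, h3, h4⟩

lemma prefix_agree {α : Type*} {w u : List α} (h : w <+: u) {i : ℕ} (hi : i < w.length) :
    w[i]? = u[i]? := by
  obtain ⟨s, rfl⟩ := h
  rw [List.getElem?_append_left hi]

lemma suffix_agree {α : Type*} {w v : List α} (h : w <:+ v) (i : ℕ) :
    w[i]? = v[(v.length - w.length) + i]? := by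
  obtain ⟨p, rfl⟩ := h
  have h1 : (p ++ w).length - w.length = p.length := by
    rw [List.length_append]; omega
  rw [h1, List.getElem?_append_right (Nat.le_add_right _ _)]
  congr 1
  omega

lemma prefix_of_agree {α : Type*} {w u : List α} (hlen : w.length ≤ u.length)
    (h : ∀ i, i < w.length → w[i]? = u[i]?) : w <+: u := by
  have he : w = u.take w.length := by
    apply List.ext_getElem?
    intro i
    rw [List.getElem?_take]
    by_cases hi : i < w.length
    · rw [if_pos hi, h i hi]
    · rw [if_neg hi, List.getElem?_eq_none (by omega)]
  rw [he]
  exact List.take_prefix _ _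

lemma suffix_of_agree {α : Type*} {w v : List α} (hlen : w.length ≤ v.length)
    (h : ∀ i, i < w.length → w[i]? = v[(v.length - w.length) + i]?) : w <:+ v := by
  have he : w = v.drop (v.length - w.length) := by
    apply List.ext_getElem?
    intro i
    rw [List.getElem?_drop]
    by_cases hi : i < w.length
    · exact h i hi
    · rw [List.getElem?_eq_none (by omega), List.getElem?_eq_none (by omega)]
  rw [he]
  exact List.drop_suffix _ _

lemma agree_uv {α : Type*} {u v w : List α} {n m : ℕ} (hvn : v.length = n)
    (hwm : w.length = m) (hpre : w <+: u) (hsuf : w <:+ v) {i : ℕ} (hi : i < m) :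
    u[i]? = v[(n - m) + i]? := by
  rw [← prefix_agree hpre (by omega)]
  have := suffix_agree hsuf i
  rwa [hvn, hwm] at this

lemma ofFn_some {q n : ℕ} (g : Fin n → Fin q) {i : ℕ} (h : i < n) :
    (List.ofFn g)[i]? = some (g ⟨i, h⟩) := by
  rw [List.getElem?_eq_getElem (by simpa using h), List.getElem_ofFn]

/-! ### Part 1: the cross-bifix-free property -/

lemma part1_key {q : ℕ} {I J : Set (Fin q)} (hd : I ∩ J = ∅) {n m : ℕ}
    {u v w : List (Fin q)}
    (hvn : v.length = n) (hwm : w.length = m)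
    (hm1 : 1 ≤ m) (hmn : m < n)
    (hpre : w <+: u) (hsuf : w <:+ v)
    {p' q' : ℕ} (hq' : q' < n)
    (huI : ∀ i, i < p' → Pt u i I) (huJ : Pt u p' J)
    (hvI : ∀ i, i < q' → Pt v i I) (hvJ : Pt v q' J)
    (hvlast : Pt v (n-1) J) :
    m + q' = n + p' ∨ (p' + 1 ≤ m ∧ m + q' + 1 ≤ n) := by
  have hvu : ∀ i, i < m → u[i]? = v[(n-m)+i]? :=
    fun i hi => agree_uv hvn hwm hpre hsuf hi
  have hstep1 : p' + 1 ≤ m := by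
    by_contra hc
    have h1 : Pt u (m-1) I := huI _ (by omega)
    have h2 : Pt v ((n-m)+(m-1)) I := Pt_congr (hvu (m-1) (by omega)) h1
    rw [show (n-m)+(m-1) = n-1 by omega] at h2
    exact Pt_not_both hd h2 hvlast
  by_cases hq2 : q' < n - m
  · right; exact ⟨hstep1, by omega⟩
  · push_neg at hq2
    rcases lt_trichotomy (q' - (n - m)) p' with hip | hip | hip
    · exfalso
      have h1 : Pt v ((n-m)+(q'-(n-m))) I :=
        Pt_congr (hvu _ (by omega)) (huI _ hip)
      rw [show (n-m)+(q'-(n-m)) = q' by omega] at h1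
      exact Pt_not_both hd h1 hvJ
    · left; omega
    · exfalso
      have h1 : Pt v ((n-m)+p') J := Pt_congr (hvu p' (by omega)) huJ
      exact Pt_not_both hd (hvI _ (by omega)) h1

lemma part1 {q : ℕ} (n k t : ℕ) (hn : 7 ≤ n) (hk1 : n ≤ 2*k) (hk2 : k ≤ n-2)
    (ht : t = max 2 (n-k-1)) {I J : Set (Fin q)} (hd : I ∩ J = ∅) :
    IsCBF (Sijk I J k n ∪ Uset I J n k t n) := by
  intro u hu v hv w hne hwu hwv hc
  obtain ⟨hpre, hsuf⟩ := hc
  have hCfact : ∀ c ∈ Sijk I J k n ∪ Uset I J n k t n, c.length = n ∧ Pt c (n-1) J ∧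
      (((∀ i, i < k → Pt c i I) ∧ Pt c k J) ∨
       ((∀ i, i < t → Pt c i I) ∧ Pt c t J ∧ Pt c (n-k+t-1) I ∧
        (∀ ℓ, t+1 ≤ ℓ → ℓ+(t+1) ≤ n → ℓ ≠ n-k+t → c.drop (n-ℓ) ∉ Vset I J n k t ℓ))) := by
    intro c hc
    rcases hc with hS | hU
    · have hlen : c.length = n := hS.1
      rw [mem_S_iff (by omega) (by omega) hlen] at hS
      exact ⟨hlen, hS.2.2, Or.inl ⟨hS.1, hS.2.1⟩⟩
    · have hlen : c.length = n := hU.1.1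
      have hV := hU.1
      rw [mem_V_iff hlen (by omega)] at hV
      exact ⟨hlen, hV.2.2.2, Or.inr ⟨hV.1, hV.2.1, hV.2.2.1 (by omega), hU.2⟩⟩
  obtain ⟨hun, hulast, hufacts⟩ := hCfact u hu
  obtain ⟨hvn, hvlast, hvfacts⟩ := hCfact v hv
  have hwm : w.length = w.length := rfl
  set m := w.length with hm
  have hm1 : 1 ≤ m := List.length_pos_iff.mpr hne
  have hmn : m < n := by omega
  have hlastagree : u[m-1]? = v[n-1]? := by
    have h1 := agree_uv hvn hm.symm hpre hsuf (show m-1 < m by omega)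
    rwa [show (n-m)+(m-1) = n-1 by omega] at h1
  rcases hufacts with ⟨huI, huJ⟩ | ⟨huI, huJ, huP, huU⟩ <;>
    rcases hvfacts with ⟨hvI, hvJ⟩ | ⟨hvI, hvJ, hvP, hvU⟩
  · rcases part1_key hd hvn hm.symm hm1 hmn hpre hsuf (by omega) huI huJ hvI hvJ hvlast with
      h | h <;> omega
  · rcases part1_key hd hvn hm.symm hm1 hmn hpre hsuf (by omega) huI huJ hvI hvJ hvlast with
      h | h <;> omega
  · rcases part1_key hd hvn hm.symm hm1 hmn hpre hsuf (by omega) huI huJ hvI hvJ hvlast with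
      h | h
    · -- m + k = n + t, i.e. m = n-k+t
      have h0 : Pt u (m-1) I := by
        rw [show m-1 = n-k+t-1 by omega]; exact huP
      exact Pt_not_both hd (Pt_congr hlastagree h0) hvlast
    · omega
  · rcases part1_key hd hvn hm.symm hm1 hmn hpre hsuf (by omega) huI huJ hvI hvJ hvlast with
      h | h
    · omega
    · by_cases hmk : m = n-k+t
      · have h0 : Pt u (m-1) I := by
          rw [show m-1 = n-k+t-1 by omega]; exact huP
        exact Pt_not_both hd (Pt_congr hlastagree h0) hvlast
      · apply hvU m (by omega) (by omega) hmk
        have hdw : v.drop (n - m) = w := by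
          obtain ⟨p, hp⟩ := hsuf
          have hpl : p.length = n - m := by
            have := congrArg List.length hp
            rw [List.length_append] at this
            omega
          rw [← hp, ← hpl, List.drop_left]
        rw [hdw, mem_V_iff hm.symm (by omega)]
        refine ⟨fun i hi => Pt_congr (prefix_agree hpre (by omega)).symm (huI i hi),
                Pt_congr (prefix_agree hpre (by omega)).symm huJ,
                fun _ => Pt_congr (prefix_agree hpre (by omega)).symm huP, ?_⟩
        have h2 := suffix_agree hsuf (m-1)
        rw [hvn, ← hm, show (n-m)+(m-1) = n-1 by omega] at h2
        exact Pt_congr h2.symm hvlast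

/-! ### Part 2: the star lemma -/

lemma star_lemma {q : ℕ} (n k t : ℕ) (hn : 7 ≤ n) (hk1 : n ≤ 2 * k) (hk2 : k ≤ n - 2)
    (ht : t = max 2 (n - k - 1)) {I J : Set (Fin q)} (hd : I ∩ J = ∅)
    {i0 j0 : Fin q} (hi0 : i0 ∈ I) (hj0 : j0 ∈ J)
    {x : List (Fin q)} (hx : x.length = n)
    {ℓ0 : ℕ} (hl0n : ℓ0 ≤ n - 1)
    (hP0 : t + 1 ≤ ℓ0 ∧ ℓ0 ≠ n - k + t ∧ x.drop (n - ℓ0) ∈ Vset I J n k t ℓ0) :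
    ¬ IsCBF (Sijk I J k n ∪ Uset I J n k t n ∪ {x}) := by
  classical
  intro hB
  have hni : ∀ a : Fin q, a ∈ I → a ∈ J → False := fun a h1 h2 => by
    have : a ∈ I ∩ J := ⟨h1, h2⟩
    rw [hd] at this
    exact this
  set xe : ℕ → Fin q := fun i => (x[i]?).getD i0 with hxedef
  have hxe : ∀ i, i < n → x[i]? = some (xe i) := by
    intro i hi
    have h : i < x.length := by omega
    simp only [hxedef, List.getElem?_eq_getElem h, Option.getD_some]
  have hPex : ∃ ℓ, t + 1 ≤ ℓ ∧ ℓ ≠ n - k + t ∧ x.drop (n - ℓ) ∈ Vset I J n k t ℓ := ⟨ℓ0, hP0⟩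
  set L := Nat.find hPex with hLdef
  obtain ⟨hL1, hL2, hLV⟩ := Nat.find_spec hPex
  have hLmin : ∀ a, a < L → ¬(t + 1 ≤ a ∧ a ≠ n - k + t ∧ x.drop (n - a) ∈ Vset I J n k t a) :=
    fun a ha => Nat.find_min hPex ha
  have hLn : L ≤ n - 1 := by
    have h := Nat.find_le (h := hPex) (n := ℓ0) hP0
    omega
  have hwlen : (x.drop (n - L)).length = L := by rw [List.length_drop]; omega
  rw [mem_V_iff hwlen (by omega)] at hLV
  obtain ⟨G1, G2, G3, G4⟩ := hLV
  have e1 : ∀ i, i < t → xe (n - L + i) ∈ I := fun i hi =>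
    Pt_mem (Pt_drop.1 (G1 i hi)) (hxe _ (by omega))
  have e2 : xe (n - L + t) ∈ J := Pt_mem (Pt_drop.1 G2) (hxe _ (by omega))
  have e3 : n - k + t < L → xe (n - L + (n - k + t - 1)) ∈ I := fun h =>
    Pt_mem (Pt_drop.1 (G3 h)) (hxe _ (by omega))
  have e4 : xe (n - 1) ∈ J := by
    have := Pt_drop.1 G4
    rw [show n - L + (L - 1) = n - 1 by omega] at this
    exact Pt_mem this (hxe _ (by omega))
  set g : Fin n → Fin q :=
    fun i => if i.1 < L then xe (n - L + i.1) else if i.1 = n - k + t - 1 then i0 else j0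
    with hgdef
  have hval : ∀ (i : ℕ) (h : i < n), (List.ofFn g)[i]? =
      some (if i < L then xe (n - L + i) else if i = n - k + t - 1 then i0 else j0) :=
    fun i h => ofFn_some g h
  have hglen : (List.ofFn g).length = n := List.length_ofFn
  have huV : List.ofFn g ∈ Vset I J n k t n := by
    rw [mem_V_iff hglen (by omega)]
    refine ⟨fun i hi => ⟨_, ?_, hval i (by omega)⟩, ⟨_, ?_, hval t (by omega)⟩,
            fun _ => ⟨_, ?_, hval (n-k+t-1) (by omega)⟩, ⟨_, ?_, hval (n-1) (by omega)⟩⟩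
    · rw [if_pos (by omega)]; exact e1 i hi
    · rw [if_pos (by omega)]; exact e2
    · by_cases hc : n - k + t - 1 < L
      · rw [if_pos hc]
        exact e3 (by omega)
      · rw [if_neg hc, if_pos rfl]; exact hi0
    · rw [if_neg (by omega), if_neg (by omega)]; exact hj0
  have huU : List.ofFn g ∈ Uset I J n k t n := by
    refine ⟨huV, ?_⟩
    intro ℓ' h1 h2 h3 hmem
    have hS'len : ((List.ofFn g).drop (n - ℓ')).length = ℓ' := by
      rw [List.length_drop, hglen]; omega
    rw [mem_V_iff hS'len (by omega)] at hmem
    obtain ⟨F1, F2, F3, F4⟩ := hmem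
    by_cases hc1 : ℓ' ≤ n - L
    · -- suffix entirely within the filler
      by_cases hc2 : n - ℓ' = n - k + t - 1
      · have hF := Pt_mem (Pt_drop.1 (F1 1 (by omega))) (hval (n - ℓ' + 1) (by omega))
        rw [if_neg (by omega), if_neg (by omega)] at hF
        exact hni j0 hF hj0
      · have hF := Pt_mem (Pt_drop.1 (F1 0 (by omega))) (hval (n - ℓ' + 0) (by omega))
        rw [if_neg (by omega), if_neg (by omega)] at hF
        exact hni j0 hF hj0
    · push_neg at hc1
      set a := L + ℓ' - n with hadef
      by_cases hc3 : a ≤ t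
      · -- the first t letters of the suffix include position L-1, which carries xe (n-1) ∈ J
        have hF := Pt_mem (Pt_drop.1 (F1 (a-1) (by omega))) (hval (n - ℓ' + (a-1)) (by omega))
        rw [if_pos (by omega), show n - L + (n - ℓ' + (a-1)) = n - 1 by omega] at hF
        exact hni _ hF e4
      · push_neg at hc3
        have haL : a < L := by omega
        have hTlen : (x.drop (n - a)).length = a := by rw [List.length_drop]; omega
        have hTV : x.drop (n - a) ∈ Vset I J n k t a := by
          rw [mem_V_iff hTlen (by omega)]
          refine ⟨fun i hi => ?_, ?_, fun hlt => ?_, ?_⟩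
          · have hF := Pt_mem (Pt_drop.1 (F1 i (by omega))) (hval (n - ℓ' + i) (by omega))
            rw [if_pos (by omega), show n - L + (n - ℓ' + i) = n - a + i by omega] at hF
            exact Pt_drop.2 ⟨_, hF, hxe _ (by omega)⟩
          · by_cases hc4 : a = t + 1
            · refine Pt_drop.2 ⟨_, ?_, hxe (n - a + t) (by omega)⟩
              rw [show n - a + t = n - 1 by omega]
              exact e4
            · have hF := Pt_mem (Pt_drop.1 F2) (hval (n - ℓ' + t) (by omega))
              rw [if_pos (by omega), show n - L + (n - ℓ' + t) = n - a + t by omega] at hF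
              exact Pt_drop.2 ⟨_, hF, hxe _ (by omega)⟩
          · have hF := Pt_mem (Pt_drop.1 (F3 (by omega))) (hval (n - ℓ' + (n-k+t-1)) (by omega))
            rw [if_pos (by omega),
                show n - L + (n - ℓ' + (n-k+t-1)) = n - a + (n-k+t-1) by omega] at hF
            exact Pt_drop.2 ⟨_, hF, hxe _ (by omega)⟩
          · refine Pt_drop.2 ⟨_, ?_, hxe (n - a + (a-1)) (by omega)⟩
            rw [show n - a + (a-1) = n - 1 by omega]
            exact e4
        have haeq : a = n - k + t := by
          by_contra hne'
          exact hLmin a haL ⟨by omega, hne', hTV⟩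
        have hF := Pt_mem (Pt_drop.1 (F3 (by omega))) (hval (n - ℓ' + (n-k+t-1)) (by omega))
        rw [if_pos (by omega), show n - L + (n - ℓ' + (n-k+t-1)) = n - 1 by omega] at hF
        exact hni _ hF e4
  have hwpre : x.drop (n - L) <+: List.ofFn g := by
    apply prefix_of_agree (by rw [hwlen, hglen]; omega)
    intro i hi
    rw [hwlen] at hi
    rw [List.getElem?_drop, hxe (n - L + i) (by omega), hval i (by omega), if_pos hi]
  exact hB (List.ofFn g) (Or.inl (Or.inr huU)) x (Or.inr rfl) (x.drop (n - L))
    (by rw [← List.length_pos_iff, hwlen]; omega)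
    (by rw [hwlen, hglen]; omega)
    (by rw [hwlen, hx]; omega)
    ⟨hwpre, List.drop_suffix _ _⟩


section Cases

variable {q : ℕ} {n k t : ℕ} {I J : Set (Fin q)} {i0 j0 : Fin q} {x : List (Fin q)}

/-- Case A: the first letter of `x` lies in `J`. -/
lemma caseA (hn : 7 ≤ n) (hk1 : n ≤ 2 * k) (hk2 : k ≤ n - 2)
    (hi0 : i0 ∈ I) (hj0 : j0 ∈ J) (hxlen : x.length = n)
    (xe : ℕ → Fin q) (hxe : ∀ i, i < n → x[i]? = some (xe i))
    (hx0 : xe 0 ∈ J) :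
    ¬ IsCBF (Sijk I J k n ∪ Uset I J n k t n ∪ {x}) := by
  intro hB
  set g : Fin n → Fin q := fun i => if i.1 < k then i0 else if i.1 = n-1 then xe 0 else j0
    with hgdef
  have hval : ∀ (i : ℕ) (h : i < n), (List.ofFn g)[i]? =
      some (if i < k then i0 else if i = n-1 then xe 0 else j0) := fun i h => ofFn_some g h
  have hvS : List.ofFn g ∈ Sijk I J k n := by
    rw [mem_S_iff hk1 (by omega) (List.length_ofFn : (List.ofFn g).length = n)]
    refine ⟨fun i hi => ⟨_, ?_, hval i (by omega)⟩, ⟨_, ?_, hval k (by omega)⟩,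
            ⟨_, ?_, hval (n-1) (by omega)⟩⟩
    · rw [if_pos hi]; exact hi0
    · rw [if_neg (by omega), if_neg (by omega)]; exact hj0
    · rw [if_neg (by omega), if_pos rfl]; exact hx0
  apply hB x (Or.inr rfl) (List.ofFn g) (Or.inl (Or.inl hvS)) [xe 0]
    (by simp) (by simp [hxlen]; omega) (by simp; omega)
  constructor
  · apply prefix_of_agree (by simp [hxlen]; omega)
    intro i hi
    have hi0' : i = 0 := by simp at hi; omega
    subst hi0'
    simp [hxe 0 (by omega)]
  · apply suffix_of_agree (by simp; omega)
    intro i hi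
    have hi0' : i = 0 := by simp at hi; omega
    subst hi0'
    have h1 : (List.ofFn g).length - [xe 0].length + 0 = n - 1 := by simp
    rw [h1, hval (n-1) (by omega), if_neg (by omega), if_pos rfl]
    simp

/-- Case B: the last letter of `x` lies in `I`. -/
lemma caseB (hn : 7 ≤ n) (hk1 : n ≤ 2 * k) (hk2 : k ≤ n - 2)
    (hi0 : i0 ∈ I) (hj0 : j0 ∈ J) (hxlen : x.length = n)
    (xe : ℕ → Fin q) (hxe : ∀ i, i < n → x[i]? = some (xe i))
    (hxn : xe (n-1) ∈ I) :
    ¬ IsCBF (Sijk I J k n ∪ Uset I J n k t n ∪ {x}) := by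
  intro hB
  set g : Fin n → Fin q := fun i => if i.1 < k then xe (n-1) else j0 with hgdef
  have hval : ∀ (i : ℕ) (h : i < n), (List.ofFn g)[i]? =
      some (if i < k then xe (n-1) else j0) := fun i h => ofFn_some g h
  have huS : List.ofFn g ∈ Sijk I J k n := by
    rw [mem_S_iff hk1 (by omega) (List.length_ofFn : (List.ofFn g).length = n)]
    refine ⟨fun i hi => ⟨_, ?_, hval i (by omega)⟩, ⟨_, ?_, hval k (by omega)⟩,
            ⟨_, ?_, hval (n-1) (by omega)⟩⟩
    · rw [if_pos hi]; exact hxn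
    · rw [if_neg (by omega)]; exact hj0
    · rw [if_neg (by omega)]; exact hj0
  apply hB (List.ofFn g) (Or.inl (Or.inl huS)) x (Or.inr rfl) [xe (n-1)]
    (by simp) (by simp; omega) (by simp [hxlen]; omega)
  constructor
  · apply prefix_of_agree (by simp; omega)
    intro i hi
    have hi0' : i = 0 := by simp at hi; omega
    subst hi0'
    rw [hval 0 (by omega), if_pos (by omega)]
    simp
  · apply suffix_of_agree (by simp [hxlen]; omega)
    intro i hi
    have hi0' : i = 0 := by simp at hi; omega
    subst hi0'
    have h1 : x.length - [xe (n-1)].length + 0 = n - 1 := by simp [hxlen]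
    rw [h1, hxe (n-1) (by omega)]
    simp

/-- Case 5: the leading `I`-run has length `r ≥ k+1`. -/
lemma case5 (hn : 7 ≤ n) (hk1 : n ≤ 2 * k) (hk2 : k ≤ n - 2)
    (hj0 : j0 ∈ J) (hxlen : x.length = n)
    (xe : ℕ → Fin q) (hxe : ∀ i, i < n → x[i]? = some (xe i))
    {r : ℕ} (hr5 : k + 1 ≤ r) (hrn : r ≤ n - 1)
    (hrI : ∀ i, i < r → xe i ∈ I) (hrJ : xe r ∈ J) :
    ¬ IsCBF (Sijk I J k n ∪ Uset I J n k t n ∪ {x}) := by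
  intro hB
  set g : Fin n → Fin q := fun i => if i.1 < n - r + k then xe (r - k + i.1) else j0
    with hgdef
  have hval : ∀ (i : ℕ) (h : i < n), (List.ofFn g)[i]? =
      some (if i < n - r + k then xe (r - k + i) else j0) := fun i h => ofFn_some g h
  have huS : List.ofFn g ∈ Sijk I J k n := by
    rw [mem_S_iff hk1 (by omega) (List.length_ofFn : (List.ofFn g).length = n)]
    refine ⟨fun i hi => ⟨_, ?_, hval i (by omega)⟩, ⟨_, ?_, hval k (by omega)⟩,
            ⟨_, ?_, hval (n-1) (by omega)⟩⟩
    · rw [if_pos (by omega)]; exact hrI _ (by omega)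
    · rw [if_pos (by omega), show r - k + k = r by omega]; exact hrJ
    · rw [if_neg (by omega)]; exact hj0
  apply hB (List.ofFn g) (Or.inl (Or.inl huS)) x (Or.inr rfl) (x.drop (r - k))
    (by rw [← List.length_pos_iff, List.length_drop, hxlen]; omega)
    (by rw [List.length_drop, hxlen, List.length_ofFn]; omega)
    (by rw [List.length_drop, hxlen]; omega)
  constructor
  · apply prefix_of_agree (by rw [List.length_drop, hxlen, List.length_ofFn]; omega)
    intro i hi
    rw [List.length_drop, hxlen] at hi
    rw [List.getElem?_drop, hxe (r - k + i) (by omega), hval i (by omega),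
        if_pos (by omega)]
  · exact List.drop_suffix _ _

/-- Case 6: the leading `I`-run has length `r ≤ n-k-2`. -/
lemma case6 (hn : 7 ≤ n) (hk1 : n ≤ 2 * k) (hk2 : k ≤ n - 2)
    (hi0 : i0 ∈ I) (hj0 : j0 ∈ J) (hxlen : x.length = n)
    (xe : ℕ → Fin q) (hxe : ∀ i, i < n → x[i]? = some (xe i))
    {r : ℕ} (hr1 : 1 ≤ r) (hr6 : r + k + 2 ≤ n)
    (hrI : ∀ i, i < r → xe i ∈ I) (hrJ : xe r ∈ J) :
    ¬ IsCBF (Sijk I J k n ∪ Uset I J n k t n ∪ {x}) := by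
  intro hB
  set g : Fin n → Fin q :=
    fun i => if n - r - 1 ≤ i.1 then xe (i.1 - (n - r - 1)) else
             if i.1 < k then i0 else j0 with hgdef
  have hval : ∀ (i : ℕ) (h : i < n), (List.ofFn g)[i]? =
      some (if n - r - 1 ≤ i then xe (i - (n - r - 1)) else
            if i < k then i0 else j0) := fun i h => ofFn_some g h
  have hvS : List.ofFn g ∈ Sijk I J k n := by
    rw [mem_S_iff hk1 (by omega) (List.length_ofFn : (List.ofFn g).length = n)]
    refine ⟨fun i hi => ⟨_, ?_, hval i (by omega)⟩, ⟨_, ?_, hval k (by omega)⟩,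
            ⟨_, ?_, hval (n-1) (by omega)⟩⟩
    · rw [if_neg (by omega), if_pos hi]; exact hi0
    · rw [if_neg (by omega), if_neg (by omega)]; exact hj0
    · rw [if_pos (by omega), show n - 1 - (n - r - 1) = r by omega]; exact hrJ
  apply hB x (Or.inr rfl) (List.ofFn g) (Or.inl (Or.inl hvS)) (x.take (r+1))
    (by rw [← List.length_pos_iff, List.length_take, hxlen]; omega)
    (by rw [List.length_take, hxlen]; omega)
    (by rw [List.length_take, hxlen, List.length_ofFn]; omega)
  constructor
  · exact List.take_prefix _ _
  · apply suffix_of_agree (by rw [List.length_take, hxlen, List.length_ofFn]; omega)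
    intro i hi
    rw [List.length_take, hxlen] at hi
    have hir : i < r + 1 := by omega
    rw [List.getElem?_take, if_pos hir, hxe i (by omega)]
    have h1 : (List.ofFn g).length - (x.take (r+1)).length + i = n - r - 1 + i := by
      rw [List.length_ofFn, List.length_take, hxlen]; omega
    rw [h1, hval (n - r - 1 + i) (by omega), if_pos (by omega),
        show n - r - 1 + i - (n - r - 1) = i by omega]

/-- Case 7: the pivotal letter `xe (n-k+r-1)` lies in `J`. -/
lemma case7 (hn : 7 ≤ n) (hk1 : n ≤ 2 * k) (hk2 : k ≤ n - 2)
    (hi0 : i0 ∈ I) (hxlen : x.length = n)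
    (xe : ℕ → Fin q) (hxe : ∀ i, i < n → x[i]? = some (xe i))
    {r : ℕ} (hr1 : 1 ≤ r) (hrk : r ≤ k - 1)
    (hrI : ∀ i, i < r → xe i ∈ I) (hrJ : xe r ∈ J)
    (hy : xe (n - k + r - 1) ∈ J) :
    ¬ IsCBF (Sijk I J k n ∪ Uset I J n k t n ∪ {x}) := by
  intro hB
  set g : Fin n → Fin q :=
    fun i => if k - r ≤ i.1 then xe (i.1 - (k - r)) else i0 with hgdef
  have hval : ∀ (i : ℕ) (h : i < n), (List.ofFn g)[i]? =
      some (if k - r ≤ i then xe (i - (k - r)) else i0) := fun i h => ofFn_some g h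
  have hvS : List.ofFn g ∈ Sijk I J k n := by
    rw [mem_S_iff hk1 (by omega) (List.length_ofFn : (List.ofFn g).length = n)]
    refine ⟨fun i hi => ⟨_, ?_, hval i (by omega)⟩, ⟨_, ?_, hval k (by omega)⟩,
            ⟨_, ?_, hval (n-1) (by omega)⟩⟩
    · by_cases hc : k - r ≤ i
      · rw [if_pos hc]; exact hrI _ (by omega)
      · rw [if_neg hc]; exact hi0
    · rw [if_pos (by omega), show k - (k - r) = r by omega]; exact hrJ
    · rw [if_pos (by omega), show n - 1 - (k - r) = n - k + r - 1 by omega]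
      exact hy
  apply hB x (Or.inr rfl) (List.ofFn g) (Or.inl (Or.inl hvS)) (x.take (n - k + r))
    (by rw [← List.length_pos_iff, List.length_take, hxlen]; omega)
    (by rw [List.length_take, hxlen]; omega)
    (by rw [List.length_take, hxlen, List.length_ofFn]; omega)
  constructor
  · exact List.take_prefix _ _
  · apply suffix_of_agree
      (by rw [List.length_take, hxlen, List.length_ofFn]; omega)
    intro i hi
    rw [List.length_take, hxlen] at hi
    have hir : i < n - k + r := by omega
    rw [List.getElem?_take, if_pos hir, hxe i (by omega)]
    have h1 : (List.ofFn g).length - (x.take (n-k+r)).length + i = k - r + i := by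
      rw [List.length_ofFn, List.length_take, hxlen]; omega
    rw [h1, hval (k - r + i) (by omega), if_pos (by omega),
        show k - r + i - (k - r) = i by omega]

/-- Case 8: `t+1 ≤ r ≤ k-1` and the pivotal letter lies in `I`. -/
lemma case8 (hn : 7 ≤ n) (hk1 : n ≤ 2 * k) (hk2 : k ≤ n - 2)
    (ht : t = max 2 (n - k - 1)) (hd : I ∩ J = ∅)
    (hi0 : i0 ∈ I) (hj0 : j0 ∈ J) (hxlen : x.length = n)
    (xe : ℕ → Fin q) (hxe : ∀ i, i < n → x[i]? = some (xe i))
    {r : ℕ} (hr8 : t + 1 ≤ r) (hrk : r ≤ k - 1)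
    (hrI : ∀ i, i < r → xe i ∈ I) (hrJ : xe r ∈ J)
    (hyI : xe (n - k + r - 1) ∈ I) (hxn1J : xe (n-1) ∈ J) :
    ¬ IsCBF (Sijk I J k n ∪ Uset I J n k t n ∪ {x}) := by
  refine star_lemma n k t hn hk1 hk2 ht hd hi0 hj0 hxlen
    (ℓ0 := n - r + t) (by omega) ⟨by omega, by omega, ?_⟩
  have hdl : (x.drop (n - (n - r + t))).length = n - r + t := by
    rw [List.length_drop, hxlen]; omega
  rw [mem_V_iff hdl (by omega)]
  have hnr : n - (n - r + t) = r - t := by omega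
  refine ⟨fun i hi => ?_, ?_, fun _ => ?_, ?_⟩
  · refine Pt_drop.2 ⟨_, ?_, hxe (n - (n - r + t) + i) (by omega)⟩
    rw [hnr]
    exact hrI _ (by omega)
  · refine Pt_drop.2 ⟨_, ?_, hxe (n - (n - r + t) + t) (by omega)⟩
    rw [hnr, show r - t + t = r by omega]
    exact hrJ
  · refine Pt_drop.2 ⟨_, ?_, hxe (n - (n - r + t) + (n - k + t - 1)) (by omega)⟩
    rw [hnr, show r - t + (n - k + t - 1) = n - k + r - 1 by omega]
    exact hyI
  · refine Pt_drop.2 ⟨_, ?_, hxe (n - (n - r + t) + (n - r + t - 1)) (by omega)⟩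
    rw [hnr, show r - t + (n - r + t - 1) = n - 1 by omega]
    exact hxn1J

/-- Case 10: the degenerate case `k = n-2`, `t = 2`, `r = 1`. -/
lemma case10 (hn : 7 ≤ n) (hk1 : n ≤ 2 * k) (hk2 : k ≤ n - 2)
    (hk10 : k = n - 2) (ht10 : t = 2) (hd : I ∩ J = ∅)
    (hi0 : i0 ∈ I) (hj0 : j0 ∈ J) (hxlen : x.length = n)
    (xe : ℕ → Fin q) (hxe : ∀ i, i < n → x[i]? = some (xe i))
    (hx1J : xe 1 ∈ J) :
    ¬ IsCBF (Sijk I J k n ∪ Uset I J n k t n ∪ {x}) := by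
  intro hB
  have hni : ∀ a : Fin q, a ∈ I → a ∈ J → False := fun a h1 h2 => by
    have : a ∈ I ∩ J := ⟨h1, h2⟩
    rw [hd] at this
    exact this
  set g : Fin n → Fin q :=
    fun i => if i.1 < 2 then i0 else if i.1 = 3 then i0 else
             if i.1 < n - 2 then j0 else xe (i.1 - (n - 2)) with hgdef
  have hval : ∀ (i : ℕ) (h : i < n), (List.ofFn g)[i]? =
      some (if i < 2 then i0 else if i = 3 then i0 else
            if i < n - 2 then j0 else xe (i - (n - 2))) :=
    fun i h => ofFn_some g h
  have hglen : (List.ofFn g).length = n := List.length_ofFn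
  have hvV : List.ofFn g ∈ Vset I J n k t n := by
    rw [mem_V_iff hglen (by omega)]
    refine ⟨fun i hi => ⟨_, ?_, hval i (by omega)⟩,
            ⟨_, ?_, hval t (by omega)⟩,
            fun _ => ⟨_, ?_, hval (n-k+t-1) (by omega)⟩,
            ⟨_, ?_, hval (n-1) (by omega)⟩⟩
    · rw [if_pos (by omega)]; exact hi0
    · rw [if_neg (by omega), if_neg (by omega), if_pos (by omega)]
      exact hj0
    · rw [if_neg (by omega), if_pos (by omega)]; exact hi0
    · rw [if_neg (by omega), if_neg (by omega), if_neg (by omega),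
          show n - 1 - (n - 2) = 1 by omega]
      exact hx1J
  have hvU : List.ofFn g ∈ Uset I J n k t n := by
    refine ⟨hvV, ?_⟩
    intro ℓ h1 h2 h3 hmem
    have hSlen : ((List.ofFn g).drop (n - ℓ)).length = ℓ := by
      rw [List.length_drop, hglen]; omega
    rw [mem_V_iff hSlen (by omega)] at hmem
    obtain ⟨F1, F2, F3, F4⟩ := hmem
    by_cases hc : n - ℓ = 3
    · have hF := Pt_mem (Pt_drop.1 (F1 1 (by omega)))
        (hval (n - ℓ + 1) (by omega))
      rw [if_neg (by omega), if_neg (by omega), if_pos (by omega)] at hF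
      exact hni j0 hF hj0
    · have hF := Pt_mem (Pt_drop.1 (F1 0 (by omega)))
        (hval (n - ℓ + 0) (by omega))
      rw [if_neg (by omega), if_neg (by omega), if_pos (by omega)] at hF
      exact hni j0 hF hj0
  apply hB x (Or.inr rfl) (List.ofFn g) (Or.inl (Or.inr hvU)) (x.take 2)
    (by rw [← List.length_pos_iff, List.length_take, hxlen]; omega)
    (by rw [List.length_take, hxlen]; omega)
    (by rw [List.length_take, hxlen, hglen]; omega)
  constructor
  · exact List.take_prefix _ _
  · apply suffix_of_agree (by rw [List.length_take, hxlen, hglen]; omega)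
    intro i hi
    rw [List.length_take, hxlen] at hi
    have hir : i < 2 := by omega
    rw [List.getElem?_take, if_pos hir, hxe i (by omega)]
    have h1 : (List.ofFn g).length - (x.take 2).length + i = n - 2 + i := by
      rw [hglen, List.length_take, hxlen]; omega
    rw [h1, hval (n - 2 + i) (by omega), if_neg (by omega),
        if_neg (by omega), if_neg (by omega),
        show n - 2 + i - (n - 2) = i by omega]

end Cases

theorem stmt17 (q n k t : ℕ) (hn : 7 ≤ n) (hq : 1 < q) (hk1 : n ≤ 2 * k) (hk2 : k ≤ n - 2)
    (ht : t = max 2 (n - k - 1))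
    (I J : Set (Fin q)) (hIJ : I ∪ J = Set.univ) (hd : I ∩ J = ∅)
    (hI : I.Nonempty) (hJ : J.Nonempty) :
    IsCBF (Sijk I J k n ∪ Uset I J n k t n) ∧
    ∀ x : List (Fin q), x.length = n → x ∉ Sijk I J k n ∪ Uset I J n k t n →
      ¬ IsCBF (Sijk I J k n ∪ Uset I J n k t n ∪ {x}) := by
  classical
  obtain ⟨i0, hi0⟩ := hI
  obtain ⟨j0, hj0⟩ := hJ
  have hIJ' : ∀ a : Fin q, a ∉ I → a ∈ J := fun a ha => by
    have h : a ∈ I ∪ J := by rw [hIJ]; trivial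
    rcases h with h | h
    · exact absurd h ha
    · exact h
  have hJI' : ∀ a : Fin q, a ∉ J → a ∈ I := fun a ha => by
    have h : a ∈ I ∪ J := by rw [hIJ]; trivial
    rcases h with h | h
    · exact h
    · exact absurd h ha
  refine ⟨part1 n k t hn hk1 hk2 ht hd, ?_⟩
  intro x hxlen hxC
  set xe : ℕ → Fin q := fun i => (x[i]?).getD i0 with hxedef
  have hxe : ∀ i, i < n → x[i]? = some (xe i) := by
    intro i hi
    have h : i < x.length := by omega
    simp only [hxedef, List.getElem?_eq_getElem h, Option.getD_some]
  have hxP : ∀ (S : Set (Fin q)) (i : ℕ), i < n → xe i ∈ S → Pt x i S :=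
    fun S i hi hm => ⟨_, hm, hxe i hi⟩
  by_cases hx0 : xe 0 ∈ J
  · exact caseA hn hk1 hk2 hi0 hj0 hxlen xe hxe hx0
  · have hx0I : xe 0 ∈ I := hJI' _ hx0
    by_cases hxn : xe (n-1) ∈ I
    · exact caseB hn hk1 hk2 hi0 hj0 hxlen xe hxe hxn
    · have hxn1J : xe (n-1) ∈ J := hIJ' _ hxn
      have hrex : ∃ i, xe i ∉ I := ⟨n-1, hxn⟩
      set r := Nat.find hrex with hrdef
      have hrI : ∀ i, i < r → xe i ∈ I := by
        intro i hi
        have := Nat.find_min hrex hi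
        simpa using this
      have hrnI : xe r ∉ I := Nat.find_spec hrex
      have hrJ : xe r ∈ J := hIJ' _ hrnI
      have hr1 : 1 ≤ r := by
        have : r ≠ 0 := fun h => hrnI (h ▸ hx0I)
        omega
      have hrn : r ≤ n - 1 := Nat.find_le hxn
      by_cases hrk : r = k
      · exact absurd (Or.inl (by
          rw [mem_S_iff hk1 (by omega) hxlen]
          exact ⟨fun i hi => hxP I i (by omega) (hrI i (by omega)),
                 hxP J k (by omega) (hrk ▸ hrJ), hxP J (n-1) (by omega) hxn1J⟩)) hxC
      · by_cases hr5 : k + 1 ≤ r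
        · exact case5 hn hk1 hk2 hj0 hxlen xe hxe hr5 hrn hrI hrJ
        · by_cases hr6 : r + k + 2 ≤ n
          · exact case6 hn hk1 hk2 hi0 hj0 hxlen xe hxe hr1 hr6 hrI hrJ
          · by_cases hy : xe (n - k + r - 1) ∈ J
            · exact case7 hn hk1 hk2 hi0 hxlen xe hxe hr1 (by omega) hrI hrJ hy
            · have hyI : xe (n - k + r - 1) ∈ I := hJI' _ hy
              by_cases hr8 : t + 1 ≤ r
              · exact case8 hn hk1 hk2 ht hd hi0 hj0 hxlen xe hxe hr8 (by omega)
                  hrI hrJ hyI hxn1J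
              · by_cases hr9 : r = t
                · have hxV : x ∈ Vset I J n k t n := by
                    rw [mem_V_iff hxlen (by omega)]
                    refine ⟨fun i hi => hxP I i (by omega) (hrI i (by omega)),
                            hxP J t (by omega) (hr9 ▸ hrJ),
                            fun _ => hxP I (n-k+t-1) (by omega) ?_,
                            hxP J (n-1) (by omega) hxn1J⟩
                    rw [show n - k + t - 1 = n - k + r - 1 by omega]
                    exact hyI
                  have hxU : x ∉ Uset I J n k t n := fun h => hxC (Or.inr h)
                  have hex : ¬ (∀ ℓ : ℕ, t + 1 ≤ ℓ → ℓ + (t + 1) ≤ n → ℓ ≠ n - k + t →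
                      x.drop (n - ℓ) ∉ Vset I J n k t ℓ) := fun hall => hxU ⟨hxV, hall⟩
                  push_neg at hex
                  obtain ⟨ℓ, h1, h2, h3, h4⟩ := hex
                  exact star_lemma n k t hn hk1 hk2 ht hd hi0 hj0 hxlen
                    (ℓ0 := ℓ) (by omega) ⟨h1, h3, h4⟩
                · have h10 : k = n - 2 ∧ t = 2 ∧ r = 1 := by omega
                  obtain ⟨hk10, ht10, hr10⟩ := h10
                  exact case10 hn hk1 hk2 hk10 ht10 hd hi0 hj0 hxlen xe hxe (hr10 ▸ hrJ)
end

section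
/- Let n ≥ 7, q > 1, and suppose n/2 ≤ k < (2n-1)/3 with t = n-k-1, and let I, J be a bipartition of Z_q. Then |U_{I,J}^{(t)}(n)| = |I|^{n-k} |J|^2 q^{k-2} − |I|^{2(n-k)-2} |J|^2 q^{2k-n-1} ((2k-n)|J| + q). -/
open List

/-! ### Auxiliary machinery -/

lemma list_eq_ofFn' {α : Type*} {n : ℕ} (w : List α) (h : w.length = n) :
    ∃ f : Fin n → α, w = List.ofFn f := by
  subst h; exact ⟨fun i => w[(i : ℕ)], (List.ofFn_getElem (xs := w)).symm⟩

lemma prod_Ico_const' (f : ℕ → ℕ) {a b c : ℕ} (hc : ∀ j, a ≤ j → j < b → f j = c) :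
    ∏ j ∈ Finset.Ico a b, f j = c ^ (b - a) := by
  rw [Finset.prod_congr rfl (fun j hj => hc j (Finset.mem_Ico.mp hj).1 (Finset.mem_Ico.mp hj).2),
    Finset.prod_const, Nat.card_Ico]

lemma prod_range_split7' (f : ℕ → ℕ) {p1 p2 p3 p4 p5 p6 n : ℕ}
    (h1 : p1 ≤ p2) (h2 : p2 ≤ p3) (h3 : p3 ≤ p4) (h4 : p4 ≤ p5) (h5 : p5 ≤ p6) (h6 : p6 ≤ n) :
    ∏ j ∈ Finset.range n, f j =
      (∏ j ∈ Finset.Ico 0 p1, f j) * (∏ j ∈ Finset.Ico p1 p2, f j) *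
      (∏ j ∈ Finset.Ico p2 p3, f j) * (∏ j ∈ Finset.Ico p3 p4, f j) *
      (∏ j ∈ Finset.Ico p4 p5, f j) * (∏ j ∈ Finset.Ico p5 p6, f j) *
      (∏ j ∈ Finset.Ico p6 n, f j) := by
  rw [Finset.range_eq_Ico,
    ← Finset.prod_Ico_consecutive f (Nat.zero_le p6) h6,
    ← Finset.prod_Ico_consecutive f (Nat.zero_le p5) h5,
    ← Finset.prod_Ico_consecutive f (Nat.zero_le p4) h4,
    ← Finset.prod_Ico_consecutive f (Nat.zero_le p3) h3,
    ← Finset.prod_Ico_consecutive f (Nat.zero_le p2) h2,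
    ← Finset.prod_Ico_consecutive f (Nat.zero_le p1) h1]

/-- Full-word membership characterization for `Vset`. -/
lemma ofFn_mem_Vset_iff (q n k t : ℕ) (I J : Set (Fin q)) (f : Fin n → Fin q)
    (ht : t < n) (hnk : n - k + t < n) (hnk1 : 1 ≤ n - k + t) :
    (List.ofFn f ∈ Vset I J n k t n) ↔
      ((∀ i : Fin n, (i : ℕ) < t → f i ∈ I) ∧
       (∀ i : Fin n, (i : ℕ) = t → f i ∈ J) ∧
       (∀ i : Fin n, (i : ℕ) = n - k + t - 1 → f i ∈ I) ∧
       (∀ i : Fin n, (i : ℕ) = n - 1 → f i ∈ J)) := by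
  constructor
  · rintro ⟨h0, h1, h2, h3, h4⟩
    have h3' := h3 hnk
    refine ⟨?_, ?_, ?_, ?_⟩
    · intro i hi
      apply h1
      rw [List.mem_take_iff_getElem]
      refine ⟨(i : ℕ), by simp [List.length_ofFn]; omega, ?_⟩
      rw [List.getElem_ofFn]
    · intro i hi
      obtain ⟨a, haJ, ha⟩ := h2
      rw [List.getElem?_ofFn, dif_pos (show t < n from ht)] at ha
      obtain rfl := Option.some.inj ha
      convert haJ using 2
      exact Fin.ext (by simp only [Fin.val_mk]; omega)
    · intro i hi
      obtain ⟨a, haI, ha⟩ := h3'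
      rw [List.getElem?_ofFn, dif_pos (show n - k + t - 1 < n by omega)] at ha
      obtain rfl := Option.some.inj ha
      convert haI using 2
      exact Fin.ext (by simp only [Fin.val_mk]; omega)
    · intro i hi
      obtain ⟨a, haJ, ha⟩ := h4
      rw [List.getElem?_ofFn, dif_pos (show n - 1 < n by omega)] at ha
      obtain rfl := Option.some.inj ha
      convert haJ using 2
      exact Fin.ext (by simp only [Fin.val_mk]; omega)
  · rintro ⟨h1, h2, h3, h4⟩
    refine ⟨List.length_ofFn (f := f), ?_, ?_, ?_, ?_⟩
    · intro x hx
      rw [List.mem_take_iff_getElem] at hx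
      obtain ⟨i, hm, hi⟩ := hx
      rw [List.getElem_ofFn] at hi
      subst hi
      simp [List.length_ofFn] at hm
      exact h1 _ (by simp only [Fin.val_mk]; omega)
    · exact ⟨f ⟨t, ht⟩, h2 _ rfl, by
        rw [List.getElem?_ofFn, dif_pos ht]⟩
    · intro _
      exact ⟨f ⟨n - k + t - 1, by omega⟩, h3 _ rfl, by
        rw [List.getElem?_ofFn, dif_pos (by omega)]⟩
    · exact ⟨f ⟨n - 1, by omega⟩, h4 _ rfl, by
        rw [List.getElem?_ofFn, dif_pos (by omega)]⟩

/-- Suffix membership characterization for `Vset`. -/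
lemma drop_mem_Vset_iff (q n k t s ℓ : ℕ) (I J : Set (Fin q)) (f : Fin n → Fin q)
    (hsl : s + ℓ = n) (hl : t < ℓ) (hnk : ¬ (n - k + t < ℓ)) :
    ((List.ofFn f).drop s ∈ Vset I J n k t ℓ) ↔
      ((∀ i : Fin n, s ≤ (i : ℕ) → (i : ℕ) < s + t → f i ∈ I) ∧
       (∀ i : Fin n, (i : ℕ) = s + t → f i ∈ J) ∧
       (∀ i : Fin n, (i : ℕ) = n - 1 → f i ∈ J)) := by
  constructor
  · rintro ⟨h0, h1, h2, h3, h4⟩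
    refine ⟨?_, ?_, ?_⟩
    · intro i hi1 hi2
      apply h1
      rw [List.mem_take_iff_getElem]
      refine ⟨(i : ℕ) - s, ?_, ?_⟩
      · simp [List.length_drop, List.length_ofFn]; omega
      · rw [List.getElem_drop, List.getElem_ofFn]
        congr 1
        exact Fin.ext (by simp only [Fin.val_mk]; omega)
    · intro i hi
      obtain ⟨a, haJ, ha⟩ := h2
      rw [List.getElem?_drop, List.getElem?_ofFn,
        dif_pos (show s + t < n by omega)] at ha
      obtain rfl := Option.some.inj ha
      convert haJ using 2
      exact Fin.ext (by simp only [Fin.val_mk]; omega)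
    · intro i hi
      obtain ⟨a, haJ, ha⟩ := h4
      rw [List.getElem?_drop, List.getElem?_ofFn,
        dif_pos (show s + (ℓ - 1) < n by omega)] at ha
      obtain rfl := Option.some.inj ha
      convert haJ using 2
      exact Fin.ext (by simp only [Fin.val_mk]; omega)
  · rintro ⟨h1, h2, h3⟩
    refine ⟨by simp [List.length_drop, List.length_ofFn]; omega, ?_, ?_, ?_, ?_⟩
    · intro x hx
      rw [List.mem_take_iff_getElem] at hx
      obtain ⟨i, hm, hi⟩ := hx
      rw [List.getElem_drop, List.getElem_ofFn] at hi
      subst hi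
      simp [List.length_drop, List.length_ofFn] at hm
      exact h1 _ (by simp only [Fin.val_mk]; omega) (by simp only [Fin.val_mk]; omega)
    · refine ⟨f ⟨s + t, by omega⟩, h2 _ rfl, ?_⟩
      rw [List.getElem?_drop, List.getElem?_ofFn, dif_pos (by omega)]
    · intro hlt; exact absurd hlt hnk
    · refine ⟨f ⟨n - 1, by omega⟩, h3 _ rfl, ?_⟩
      rw [List.getElem?_drop, List.getElem?_ofFn, dif_pos (by omega)]
      congr 2
      exact Fin.ext (by simp only [Fin.val_mk]; omega)

/-- Position-wise constraint finsets for the ambient set `A`. -/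
def CAx {q : ℕ} (IF JF : Finset (Fin q)) (t n : ℕ) (j : ℕ) : Finset (Fin q) :=
  if j < t then IF else if j = t then JF else if j = 2*t then IF
  else if j = n-1 then JF else Finset.univ

/-- Position-wise constraint finsets for the bad sets `B s`. -/
def CBx {q : ℕ} (IF JF : Finset (Fin q)) (t n s : ℕ) (j : ℕ) : Finset (Fin q) :=
  if j < t then IF else if j = t then JF else if s ≤ j ∧ j < s+t then IF
  else if j = s+t then JF else if j = n-1 then JF else Finset.univ

def AFx {q : ℕ} (IF JF : Finset (Fin q)) (t n : ℕ) : Finset (Fin n → Fin q) :=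
  Fintype.piFinset fun i => CAx IF JF t n i.val

def BFx {q : ℕ} (IF JF : Finset (Fin q)) (t n s : ℕ) : Finset (Fin n → Fin q) :=
  Fintype.piFinset fun i => CBx IF JF t n s i.val

section Main

variable {q n k t : ℕ} {IF JF : Finset (Fin q)} {I J : Set (Fin q)}

lemma mem_AFx (hIF : ∀ x, x ∈ IF ↔ x ∈ I) (hJF : ∀ x, x ∈ JF ↔ x ∈ J)
    (hn5 : n = k + t + 1) (ht2 : 2 ≤ t) (htk : t + 1 ≤ k) (f : Fin n → Fin q) :
    f ∈ AFx IF JF t n ↔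
      ((∀ i : Fin n, (i : ℕ) < t → f i ∈ I) ∧
       (∀ i : Fin n, (i : ℕ) = t → f i ∈ J) ∧
       (∀ i : Fin n, (i : ℕ) = 2*t → f i ∈ I) ∧
       (∀ i : Fin n, (i : ℕ) = n - 1 → f i ∈ J)) := by
  rw [AFx, Fintype.mem_piFinset]
  constructor
  · intro h
    refine ⟨fun i hi => ?_, fun i hi => ?_, fun i hi => ?_, fun i hi => ?_⟩
    · have hh := h i; rw [CAx, if_pos hi] at hh; exact (hIF _).mp hh
    · have hh := h i; rw [CAx, if_neg (by omega), if_pos hi] at hh; exact (hJF _).mp hh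
    · have hh := h i; rw [CAx, if_neg (by omega), if_neg (by omega), if_pos hi] at hh
      exact (hIF _).mp hh
    · have hh := h i
      rw [CAx, if_neg (by omega), if_neg (by omega), if_neg (by omega), if_pos hi] at hh
      exact (hJF _).mp hh
  · rintro ⟨h1, h2, h3, h4⟩ i
    rw [CAx]
    split_ifs with c1 c2 c3 c4
    · exact (hIF _).mpr (h1 i c1)
    · exact (hJF _).mpr (h2 i c2)
    · exact (hIF _).mpr (h3 i c3)
    · exact (hJF _).mpr (h4 i c4)
    · exact Finset.mem_univ _

lemma mem_BFx (hIF : ∀ x, x ∈ IF ↔ x ∈ I) (hJF : ∀ x, x ∈ JF ↔ x ∈ J)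
    (hn5 : n = k + t + 1) (ht2 : 2 ≤ t) (htk : t + 1 ≤ k) (hk2t : k ≤ 2*t)
    {s : ℕ} (hs1 : t + 1 ≤ s) (hs2 : s ≤ k) (f : Fin n → Fin q) :
    f ∈ BFx IF JF t n s ↔
      (f ∈ AFx IF JF t n ∧
       (∀ i : Fin n, s ≤ (i : ℕ) → (i : ℕ) < s + t → f i ∈ I) ∧
       (∀ i : Fin n, (i : ℕ) = s + t → f i ∈ J)) := by
  rw [BFx, Fintype.mem_piFinset]
  constructor
  · intro h
    have hA : f ∈ AFx IF JF t n := by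
      rw [AFx, Fintype.mem_piFinset]
      intro i
      have hi := h i
      rw [CBx] at hi
      rw [CAx]
      split_ifs at hi ⊢ <;> first | assumption | exact Finset.mem_univ _ | omega
    refine ⟨hA, fun i hi1 hi2 => ?_, fun i hi => ?_⟩
    · have hh := h i
      rw [CBx, if_neg (by omega), if_neg (by omega), if_pos ⟨hi1, hi2⟩] at hh
      exact (hIF _).mp hh
    · have hh := h i
      rw [CBx, if_neg (by omega), if_neg (by omega), if_neg (by omega), if_pos hi] at hh
      exact (hJF _).mp hh
  · rintro ⟨hA, hblock, hcen⟩ i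
    rw [AFx, Fintype.mem_piFinset] at hA
    have hAi := hA i
    rw [CAx] at hAi
    rw [CBx]
    split_ifs with c1 c2 c3 c4 c5
    · rw [if_pos c1] at hAi; exact hAi
    · rw [if_neg (by omega), if_pos c2] at hAi; exact hAi
    · exact (hIF _).mpr (hblock i c3.1 c3.2)
    · exact (hJF _).mpr (hcen i c4)
    · rw [if_neg (by omega), if_neg (by omega), if_neg (by omega), if_pos c5] at hAi
      exact hAi
    · exact Finset.mem_univ _

lemma BFx_disjoint (hd' : ∀ x : Fin q, x ∈ IF → x ∈ JF → False)
    (hn5 : n = k + t + 1) (ht2 : 2 ≤ t) (htk : t + 1 ≤ k) (hk2t : k ≤ 2*t)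
    {s s' : ℕ} (hs1 : t + 1 ≤ s) (hs2 : s ≤ k) (hs1' : t + 1 ≤ s') (hs2' : s' ≤ k)
    (hss : s < s') :
    Disjoint (BFx IF JF t n s) (BFx (q := q) IF JF t n s') := by
  rw [Finset.disjoint_left]
  intro f hf hf'
  have hlt : s + t < n := by omega
  set i0 : Fin n := ⟨s + t, hlt⟩ with hi0
  have e : (i0 : ℕ) = s + t := rfl
  have h1 := Fintype.mem_piFinset.mp hf i0
  have h2 := Fintype.mem_piFinset.mp hf' i0
  rw [CBx, e] at h1 h2
  rw [if_neg (by omega), if_neg (by omega), if_neg (by omega), if_pos rfl] at h1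
  rw [if_neg (by omega), if_neg (by omega), if_pos (by omega)] at h2
  exact hd' _ h2 h1

lemma card_AFx (hn5 : n = k + t + 1) (ht2 : 2 ≤ t) (htk : t + 1 ≤ k) :
    (AFx IF JF t n).card = IF.card ^ (t+1) * JF.card ^ 2 * q ^ (k-2) := by
  rw [AFx, Fintype.card_piFinset]
  rw [Fin.prod_univ_eq_prod_range (fun j => (CAx IF JF t n j).card) n]
  rw [prod_range_split7' _ (p1 := t) (p2 := t+1) (p3 := 2*t) (p4 := 2*t+1) (p5 := 2*t+1)
    (p6 := n-1) (by omega) (by omega) (by omega) (by omega) (by omega) (by omega)]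
  rw [prod_Ico_const' _ (c := IF.card)
      (fun j hj1 hj2 => by rw [CAx]; split_ifs <;> first | rfl | omega),
    prod_Ico_const' _ (c := JF.card)
      (fun j hj1 hj2 => by rw [CAx]; split_ifs <;> first | rfl | omega),
    prod_Ico_const' _ (c := q)
      (fun j hj1 hj2 => by
        rw [CAx]; split_ifs <;> first | rfl | omega | simp [Finset.card_univ]),
    prod_Ico_const' _ (c := IF.card)
      (fun j hj1 hj2 => by rw [CAx]; split_ifs <;> first | rfl | omega),
    prod_Ico_const' _ (c := q) (fun j hj1 hj2 => by omega),
    prod_Ico_const' _ (c := q)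
      (fun j hj1 hj2 => by
        rw [CAx]; split_ifs <;> first | rfl | omega | simp [Finset.card_univ]),
    prod_Ico_const' _ (c := JF.card)
      (fun j hj1 hj2 => by rw [CAx]; split_ifs <;> first | rfl | omega)]
  rw [show t - 0 = t by omega, show t + 1 - t = 1 by omega, show 2*t - (t+1) = t - 1 by omega,
    show 2*t+1 - 2*t = 1 by omega, show 2*t+1 - (2*t+1) = 0 by omega,
    show n - 1 - (2*t+1) = k - t - 1 by omega, show n - (n-1) = 1 by omega,
    show k - 2 = (t - 1) + (k - t - 1) by omega, pow_add]
  ring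

lemma card_BFx_lt (hn5 : n = k + t + 1) (ht2 : 2 ≤ t) (htk : t + 1 ≤ k) (hk2t : k ≤ 2*t)
    {s : ℕ} (hs1 : t + 1 ≤ s) (hs2 : s < k) :
    (BFx IF JF t n s).card = IF.card ^ (2*t) * JF.card ^ 3 * q ^ (k-t-2) := by
  rw [BFx, Fintype.card_piFinset]
  rw [Fin.prod_univ_eq_prod_range (fun j => (CBx IF JF t n s j).card) n]
  rw [prod_range_split7' _ (p1 := t) (p2 := t+1) (p3 := s) (p4 := s+t) (p5 := s+t+1)
    (p6 := n-1) (by omega) (by omega) (by omega) (by omega) (by omega) (by omega)]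
  rw [prod_Ico_const' _ (c := IF.card)
      (fun j hj1 hj2 => by rw [CBx]; split_ifs <;> first | rfl | omega),
    prod_Ico_const' _ (c := JF.card)
      (fun j hj1 hj2 => by rw [CBx]; split_ifs <;> first | rfl | omega),
    prod_Ico_const' _ (c := q)
      (fun j hj1 hj2 => by
        rw [CBx]; split_ifs <;> first | rfl | omega | simp [Finset.card_univ]),
    prod_Ico_const' _ (c := IF.card)
      (fun j hj1 hj2 => by rw [CBx]; split_ifs <;> first | rfl | omega),
    prod_Ico_const' _ (c := JF.card)
      (fun j hj1 hj2 => by rw [CBx]; split_ifs <;> first | rfl | omega),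
    prod_Ico_const' _ (c := q)
      (fun j hj1 hj2 => by
        rw [CBx]; split_ifs <;> first | rfl | omega | simp [Finset.card_univ]),
    prod_Ico_const' _ (c := JF.card)
      (fun j hj1 hj2 => by rw [CBx]; split_ifs <;> first | rfl | omega)]
  rw [show t - 0 = t by omega, show t + 1 - t = 1 by omega,
    show k - t - 2 = (s - (t+1)) + (n - 1 - (s+t+1)) by omega,
    show s + t - s = t by omega, show s+t+1 - (s+t) = 1 by omega,
    show n - (n-1) = 1 by omega, show 2*t = t + t by omega]
  rw [pow_add, pow_add]
  ring

lemma card_BFx_top (hn5 : n = k + t + 1) (ht2 : 2 ≤ t) (htk : t + 1 ≤ k) (hk2t : k ≤ 2*t) :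
    (BFx IF JF t n k).card = IF.card ^ (2*t) * JF.card ^ 2 * q ^ (k-t-1) := by
  rw [BFx, Fintype.card_piFinset]
  rw [Fin.prod_univ_eq_prod_range (fun j => (CBx IF JF t n k j).card) n]
  rw [prod_range_split7' _ (p1 := t) (p2 := t+1) (p3 := k) (p4 := n-1) (p5 := n-1)
    (p6 := n-1) (by omega) (by omega) (by omega) (by omega) (by omega) (by omega)]
  rw [prod_Ico_const' _ (c := IF.card)
      (fun j hj1 hj2 => by rw [CBx]; split_ifs <;> first | rfl | omega),
    prod_Ico_const' _ (c := JF.card)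
      (fun j hj1 hj2 => by rw [CBx]; split_ifs <;> first | rfl | omega),
    prod_Ico_const' _ (c := q)
      (fun j hj1 hj2 => by
        rw [CBx]; split_ifs <;> first | rfl | omega | simp [Finset.card_univ]),
    prod_Ico_const' _ (c := IF.card)
      (fun j hj1 hj2 => by rw [CBx]; split_ifs <;> first | rfl | omega),
    prod_Ico_const' _ (a := n-1) (b := n-1) (c := q) (fun j hj1 hj2 => by omega),
    prod_Ico_const' _ (c := JF.card)
      (fun j hj1 hj2 => by rw [CBx]; split_ifs <;> first | rfl | omega)]
  rw [show t - 0 = t by omega, show t + 1 - t = 1 by omega, show k - (t+1) = k - t - 1 by omega,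
    show n - 1 - k = t by omega, show n - 1 - (n-1) = 0 by omega,
    show n - (n-1) = 1 by omega, show 2*t = t + t by omega]
  rw [pow_add]
  ring

end Main

theorem stmt19 (q n k t : ℕ) (hn : 7 ≤ n) (hq : 1 < q) (hk1 : n ≤ 2 * k)
    (hk2 : 3 * k + 1 < 2 * n) (ht : t = n - k - 1)
    (I J : Set (Fin q)) (hIJ : I ∪ J = Set.univ) (hd : I ∩ J = ∅)
    (hI : I.Nonempty) (hJ : J.Nonempty) :
    ((Uset I J n k t n).ncard : ℚ) =
      (I.ncard : ℚ) ^ (n - k) * (J.ncard : ℚ) ^ 2 * (q : ℚ) ^ ((k : ℤ) - 2) -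
      (I.ncard : ℚ) ^ (2 * (n - k) - 2) * (J.ncard : ℚ) ^ 2 *
        (q : ℚ) ^ (2 * (k : ℤ) - (n : ℤ) - 1) *
        ((2 * (k : ℤ) - (n : ℤ)) * (J.ncard : ℚ) + (q : ℚ)) := by
  classical
  have hn5 : n = k + t + 1 := by omega
  have ht2 : 2 ≤ t := by omega
  have htk : t + 1 ≤ k := by omega
  have hk2t : k ≤ 2*t := by omega
  set IF := (Set.toFinite I).toFinset with hIFdef
  set JF := (Set.toFinite J).toFinset with hJFdef
  have hIF : ∀ x, x ∈ IF ↔ x ∈ I := fun x => Set.Finite.mem_toFinset _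
  have hJF : ∀ x, x ∈ JF ↔ x ∈ J := fun x => Set.Finite.mem_toFinset _
  have hd' : ∀ x : Fin q, x ∈ IF → x ∈ JF → False := by
    intro x hx1 hx2
    have hx : x ∈ I ∩ J := ⟨(hIF x).mp hx1, (hJF x).mp hx2⟩
    rw [hd] at hx
    exact hx
  have hcardI : I.ncard = IF.card := Set.ncard_eq_toFinset_card I (Set.toFinite I)
  have hcardJ : J.ncard = JF.card := Set.ncard_eq_toFinset_card J (Set.toFinite J)
  -- the key set identity
  have hUset : Uset I J n k t n =
      List.ofFn '' (↑(AFx IF JF t n \ (Finset.Icc (t+1) k).biUnion (fun s => BFx IF JF t n s)) :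
        Set (Fin n → Fin q)) := by
    ext w
    constructor
    · rintro ⟨hV, hU⟩
      obtain ⟨f, rfl⟩ := list_eq_ofFn' w hV.1
      refine ⟨f, ?_, rfl⟩
      rw [Finset.mem_coe, Finset.mem_sdiff]
      have hfA : f ∈ AFx IF JF t n := by
        rw [mem_AFx hIF hJF hn5 ht2 htk]
        have hc := (ofFn_mem_Vset_iff q n k t I J f (by omega) (by omega) (by omega)).mp hV
        refine ⟨hc.1, hc.2.1, ?_, hc.2.2.2⟩
        intro i hi
        exact hc.2.2.1 i (by omega)
      refine ⟨hfA, ?_⟩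
      intro hmem
      rw [Finset.mem_biUnion] at hmem
      obtain ⟨s, hsmem, hfs⟩ := hmem
      rw [Finset.mem_Icc] at hsmem
      have hball := (mem_BFx hIF hJF hn5 ht2 htk hk2t hsmem.1 hsmem.2 f).mp hfs
      have hnot := hU (n - s) (by omega) (by omega) (by omega)
      apply hnot
      rw [show n - (n - s) = s by omega]
      rw [drop_mem_Vset_iff q n k t s (n - s) I J f (by omega) (by omega) (by omega)]
      refine ⟨hball.2.1, hball.2.2, ?_⟩
      intro i hi
      exact ((mem_AFx hIF hJF hn5 ht2 htk f).mp hfA).2.2.2 i hi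
    · rintro ⟨f, hf, rfl⟩
      rw [Finset.mem_coe, Finset.mem_sdiff] at hf
      obtain ⟨hfA, hfn⟩ := hf
      have hAc := (mem_AFx hIF hJF hn5 ht2 htk f).mp hfA
      constructor
      · rw [ofFn_mem_Vset_iff q n k t I J f (by omega) (by omega) (by omega)]
        refine ⟨hAc.1, hAc.2.1, ?_, hAc.2.2.2⟩
        intro i hi
        exact hAc.2.2.1 i (by omega)
      · intro ℓ h1 h2 h3 hdrop
        rw [drop_mem_Vset_iff q n k t (n - ℓ) ℓ I J f (by omega) (by omega) (by omega)] at hdrop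
        apply hfn
        rw [Finset.mem_biUnion]
        refine ⟨n - ℓ, Finset.mem_Icc.mpr ⟨by omega, by omega⟩, ?_⟩
        rw [mem_BFx hIF hJF hn5 ht2 htk hk2t (by omega) (by omega) f]
        exact ⟨hfA, hdrop.1, hdrop.2.1⟩
  have hsub : (Finset.Icc (t+1) k).biUnion (fun s => BFx IF JF t n s) ⊆ AFx IF JF t n := by
    intro f hf
    rw [Finset.mem_biUnion] at hf
    obtain ⟨s, hs, hfs⟩ := hf
    rw [Finset.mem_Icc] at hs
    exact ((mem_BFx hIF hJF hn5 ht2 htk hk2t hs.1 hs.2 f).mp hfs).1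
  have hNcard : (Uset I J n k t n).ncard
      = (AFx IF JF t n).card - ((Finset.Icc (t+1) k).biUnion (fun s => BFx IF JF t n s)).card := by
    rw [hUset, Set.ncard_image_of_injective _ List.ofFn_injective, Set.ncard_coe_finset,
      Finset.card_sdiff_of_subset hsub]
  have hdisj : ∀ s ∈ Finset.Icc (t+1) k, ∀ s' ∈ Finset.Icc (t+1) k, s ≠ s' →
      Disjoint (BFx IF JF t n s) (BFx (q := q) IF JF t n s') := by
    intro s hs s' hs' hne
    rw [Finset.mem_Icc] at hs hs'
    rcases lt_or_gt_of_ne hne with h | h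
    · exact BFx_disjoint hd' hn5 ht2 htk hk2t hs.1 hs.2 hs'.1 hs'.2 h
    · exact (BFx_disjoint hd' hn5 ht2 htk hk2t hs'.1 hs'.2 hs.1 hs.2 h).symm
  obtain ⟨k', hk'⟩ : ∃ k', k = k' + 1 := ⟨k - 1, by omega⟩
  have hconst : ∀ s ∈ Finset.Icc (t+1) k',
      (BFx IF JF t n s).card = IF.card ^ (2*t) * JF.card ^ 3 * q ^ (k-t-2) := by
    intro s hs
    rw [Finset.mem_Icc] at hs
    exact card_BFx_lt hn5 ht2 htk hk2t hs.1 (by omega)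
  have hBig : ((Finset.Icc (t+1) k).biUnion (fun s => BFx IF JF t n s)).card
      = (k - t - 1) * (IF.card ^ (2*t) * JF.card ^ 3 * q ^ (k-t-2))
        + IF.card ^ (2*t) * JF.card ^ 2 * q ^ (k-t-1) := by
    rw [Finset.card_biUnion hdisj]
    conv_lhs => rw [hk']
    rw [Finset.sum_Icc_succ_top (by omega : t + 1 ≤ k' + 1), ← hk',
      Finset.sum_congr rfl hconst, Finset.sum_const, Nat.card_Icc, smul_eq_mul,
      card_BFx_top hn5 ht2 htk hk2t, show k' + 1 - (t+1) = k - t - 1 by omega]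
  have hle2 : ((Finset.Icc (t+1) k).biUnion (fun s => BFx IF JF t n s)).card
      ≤ (AFx IF JF t n).card := Finset.card_le_card hsub
  rw [hNcard, Nat.cast_sub hle2, hBig, card_AFx hn5 ht2 htk, hcardI, hcardJ,
    show n - k = t + 1 by omega, show 2*(t+1) - 2 = 2*t by omega,
    show (k:ℤ) - 2 = ((k-2:ℕ):ℤ) by omega, zpow_natCast]
  rcases eq_or_lt_of_le hk1 with hc | hc
  · -- n = 2k
    rw [show k - t - 1 = 0 by omega, show (2*(k:ℤ) - (n:ℤ) - 1) = -1 by omega,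
      show (2 * ((k:ℤ):ℚ) - ((n:ℤ):ℚ)) = 0 by push_cast; rw [hc]; push_cast; ring,
      zpow_neg_one]
    have hq0 : (q:ℚ) ≠ 0 := Nat.cast_ne_zero.mpr (by omega)
    push_cast
    have hqq : (q:ℚ)⁻¹ * q = 1 := inv_mul_cancel₀ hq0
    linear_combination ((IF.card:ℚ)^(2*t) * (JF.card:ℚ)^2) * hqq
  · -- n < 2k
    have hco : ((k - t - 1 : ℕ) : ℚ) = 2 * ((k:ℤ):ℚ) - ((n:ℤ):ℚ) := by
      rw [show k - t - 1 = 2*k - n by omega, Nat.cast_sub hk1]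
      push_cast
      ring
    rw [show (2*(k:ℤ) - (n:ℤ) - 1) = ((k-t-2:ℕ):ℤ) by omega, zpow_natCast, ← hco,
      show k - t - 1 = (k - t - 2) + 1 by omega, pow_succ]
    push_cast
    ring
end
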